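/- Let A satisfy RIP of order 2k with constant δ_{2k}, let h ∈ R^n, let I with |I| ≤ k and J the k largest-magnitude indices of h in I^c, and suppose ‖Ah‖₂ ≤ 2ε. Then (1-δ_{2k})‖h_{I∪J}‖₂ ≤ √2 δ_{2k} ‖h_{I^c}‖₁/√k + (1+δ_{2k})^{1/2}·2ε. -/

import Mathlib

/-!
Write `h = h_{I∪J} + h_T` with `T = Iᶜ \ J`. RIP and Cauchy–Schwarz give
`(1 - δ)‖h_{I∪J}‖² ≤ ‖A h_{I∪J}‖² ≤ √(1 + δ)‖h_{I∪J}‖ · 2ε - ⟨A h_{I∪J}, A h_T⟩`.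
By polarization, RIP of order `2k` gives `|⟨A x, A y⟩| ≤ δ‖x‖‖y‖` for `x`, `y` supported on disjoint
sets of total size at most `2k`. Cut `T` into blocks of `k` entries of decreasing magnitude: every
entry of a block is at most the average magnitude over the previous block (over `J` for the first
one), so the `ℓ²`-norms of the blocks sum to at most `‖h_{Iᶜ}‖₁ / √k`. Splitting `h_{I∪J}` into
`h_I + h_J` costs the factor `√2`, which bounds the last inner product by
`√2 δ ‖h_{I∪J}‖ ‖h_{Iᶜ}‖₁ / √k`; dividing by `‖h_{I∪J}‖` gives the claim.
-/

open Finset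

def IsSparse {n : ℕ} (s : ℕ) (x : Fin n → ℝ) : Prop :=
  (Finset.univ.filter (fun i => x i ≠ 0)).card ≤ s

def IsRIP {m n : ℕ} (A : Matrix (Fin m) (Fin n) ℝ) (s : ℕ) (δ : ℝ) : Prop :=
  ∀ x : Fin n → ℝ, IsSparse s x →
    (1 - δ) * ∑ i, x i ^ 2 ≤ ∑ j, A.mulVec x j ^ 2 ∧
      ∑ j, A.mulVec x j ^ 2 ≤ (1 + δ) * ∑ i, x i ^ 2

open Matrix

theorem Finset.sum_indicator_sq {ι : Type*} [Fintype ι] (S : Finset ι) (x : ι → ℝ) :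
    ∑ i, (S : Set ι).indicator x i ^ 2 = ∑ i ∈ S, x i ^ 2 := by
  rw [← sum_indicator_subset _ (subset_univ S)]
  congr 1
  funext i
  by_cases hi : i ∈ S <;> simp [hi]

theorem Finset.indicator_union_of_disjoint {ι M : Type*} [DecidableEq ι] [AddZeroClass M]
    {S R : Finset ι} (hSR : Disjoint S R) (f : ι → M) :
    (↑(S ∪ R) : Set ι).indicator f = (S : Set ι).indicator f + (R : Set ι).indicator f := by
  rw [coe_union, Set.indicator_union_of_disjoint (disjoint_coe.2 hSR), ← Pi.add_def]

theorem Real.sqrt_add_sqrt_le_sqrt_two_mul_sqrt_add {a b : ℝ} (ha : 0 ≤ a) (hb : 0 ≤ b) :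
    √a + √b ≤ √2 * √(a + b) := by
  rw [← Real.sqrt_mul zero_le_two]
  apply Real.le_sqrt_of_sq_le
  nlinarith [Real.sq_sqrt ha, Real.sq_sqrt hb, sq_nonneg (√a - √b)]

theorem sum_sq_le_sqrt_mul_sqrt_sub {ι : Type*} (s : Finset ι) {u v w : ι → ℝ}
    (huvw : u + v = w) :
    ∑ i ∈ s, u i ^ 2 ≤ √(∑ i ∈ s, u i ^ 2) * √(∑ i ∈ s, w i ^ 2) - ∑ i ∈ s, u i * v i := by
  have hsplit : ∑ i ∈ s, u i * w i = ∑ i ∈ s, u i ^ 2 + ∑ i ∈ s, u i * v i := by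
    rw [← sum_add_distrib]
    exact sum_congr rfl fun i _ => by rw [← huvw, Pi.add_apply]; ring
  linarith [Real.sum_mul_le_sqrt_mul_sqrt s u w]

theorem mul_sqrt_le_of_mul_le_sqrt_mul {a x r : ℝ} (hx : 0 ≤ x) (hr : 0 ≤ r)
    (h : a * x ≤ √x * r) : a * √x ≤ r := by
  rcases (Real.sqrt_nonneg x).eq_or_lt with h0 | hpos
  · rwa [← h0, mul_zero]
  · refine le_of_mul_le_mul_right ?_ hpos
    rwa [mul_assoc, Real.mul_self_sqrt hx, mul_comm r]

theorem Finset.exists_subset_card_eq_forall_mem_sdiff_le {ι β : Type*} [DecidableEq ι]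
    [LinearOrder β] (f : ι → β) (T : Finset ι) {k : ℕ} (hk : k ≤ #T) :
    ∃ S ⊆ T, #S = k ∧ ∀ j ∈ S, ∀ i ∈ T \ S, f i ≤ f j := by
  induction k with
  | zero => exact ⟨∅, empty_subset _, card_empty, by simp⟩
  | succ k ih =>
    obtain ⟨S, hST, hS, hdom⟩ := ih (Nat.le_of_succ_le hk)
    obtain ⟨a, ha, hmax⟩ := (T \ S).exists_max_image f
      (by rw [← card_pos, card_sdiff_of_subset hST]; omega)
    rw [mem_sdiff] at ha
    refine ⟨insert a S, insert_subset ha.1 hST, by rw [card_insert_of_notMem ha.2, hS], ?_⟩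
    intro j hj i hi
    have hi' : i ∈ T \ S := sdiff_subset_sdiff subset_rfl (subset_insert a S) hi
    rcases mem_insert.1 hj with rfl | hj
    · exact hmax i hi'
    · exact hdom j hj i hi'

theorem sqrt_sum_sq_le_div_sqrt {ι : Type*} {S : Finset ι} {f : ι → ℝ} {k : ℕ} {a : ℝ}
    (hk : 0 < k) (hS : #S ≤ k) (ha : 0 ≤ a) (hf : ∀ i ∈ S, k * |f i| ≤ a) :
    √(∑ i ∈ S, f i ^ 2) ≤ a / √k := by
  have hk' : (0 : ℝ) < k := Nat.cast_pos.2 hk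
  have hM : 0 ≤ a / k := by positivity
  calc √(∑ i ∈ S, f i ^ 2) ≤ √(k * (a / k) ^ 2) := Real.sqrt_le_sqrt <|
        calc ∑ i ∈ S, f i ^ 2 ≤ ∑ _i ∈ S, (a / k) ^ 2 := sum_le_sum fun i hi =>
              sq_le_sq.2 (by rw [abs_of_nonneg hM, le_div_iff₀ hk', mul_comm]; exact hf i hi)
          _ = #S * (a / k) ^ 2 := by rw [sum_const, nsmul_eq_mul]
          _ ≤ k * (a / k) ^ 2 := by gcongr
    _ = a / √k := by
      rw [Real.sqrt_mul hk'.le, Real.sqrt_sq hM, mul_div_left_comm, Real.sqrt_div_self',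
        mul_one_div]

theorem abs_le_of_abs_le_mul_sqrt_sum_sq {ι : Type*} [DecidableEq ι] (g : Finset ι → ℝ)
    (hg : ∀ S R, Disjoint S R → g (S ∪ R) = g S + g R) (f : ι → ℝ) {k : ℕ} (hk : 0 < k)
    {C : ℝ} (hC : 0 ≤ C) (T : Finset ι)
    (hblock : ∀ S ⊆ T, #S ≤ k → |g S| ≤ C * √(∑ i ∈ S, f i ^ 2))
    {a : ℝ} (ha : 0 ≤ a) (hfa : ∀ i ∈ T, k * |f i| ≤ a) :
    |g T| ≤ C * ((a + ∑ i ∈ T, |f i|) / √k) := by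
  induction T using Finset.strongInduction generalizing a with
  | H T ih =>
  have hfirst : ∀ S ⊆ T, #S ≤ k → (∀ i ∈ S, k * |f i| ≤ a) → |g S| ≤ C * (a / √k) :=
    fun S hST hS hfS => (hblock S hST hS).trans
      (mul_le_mul_of_nonneg_left (sqrt_sum_sq_le_div_sqrt hk hS ha hfS) hC)
  rcases le_or_gt #T k with hTk | hkT
  · refine (hfirst T subset_rfl hTk hfa).trans ?_
    gcongr
    exact le_add_of_nonneg_right (sum_nonneg fun i _ => abs_nonneg _)
  obtain ⟨S, hST, hS, hdom⟩ := T.exists_subset_card_eq_forall_mem_sdiff_le (|f ·|) hkT.le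
  have hrest := ih (T \ S) (sdiff_ssubset hST (card_pos.1 (hS ▸ hk)))
    (fun R hR => hblock R (hR.trans sdiff_subset)) (sum_nonneg fun i _ => abs_nonneg _)
    fun i hi => by simpa [hS] using S.card_nsmul_le_sum (|f ·|) |f i| fun j hj => hdom j hj i hi
  calc |g T| = |g S + g (T \ S)| := by rw [← hg _ _ disjoint_sdiff, union_sdiff_of_subset hST]
    _ ≤ |g S| + |g (T \ S)| := abs_add_le _ _
    _ ≤ C * (a / √k) + C * ((∑ i ∈ S, |f i| + ∑ i ∈ T \ S, |f i|) / √k) :=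
      add_le_add (hfirst S hST hS.le fun i hi => hfa i (hST hi)) hrest
    _ = C * ((a + ∑ i ∈ T, |f i|) / √k) := by
      rw [← sum_sdiff hST]; ring

section RIP

variable {m n s k : ℕ} {A : Matrix (Fin m) (Fin n) ℝ} {δ : ℝ}

theorem IsSparse.of_support_subset {x : Fin n → ℝ} {S : Finset (Fin n)}
    (hx : x.support ⊆ S) (hS : #S ≤ s) : IsSparse s x :=
  (card_le_card fun _ hi => mem_coe.1 (hx (Function.mem_support.2 (mem_filter.1 hi).2))).trans hS

namespace IsRIP

variable {x y : Fin n → ℝ} {S T : Finset (Fin n)}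

theorem two_mul_inner_le (hA : IsRIP A s δ) (hx : x.support ⊆ S) (hy : y.support ⊆ T)
    (hST : Disjoint S T) (hcard : #S + #T ≤ s) :
    2 * ∑ j, (A *ᵥ x) j * (A *ᵥ y) j ≤ δ * (∑ i, x i ^ 2 + ∑ i, y i ^ 2) := by
  have horth : ∀ i, x i * y i = 0 := fun i => by
    by_cases hi : i ∈ S
    · rw [Function.notMem_support.1 fun hy' => disjoint_left.1 hST hi (hy hy'), mul_zero]
    · rw [Function.notMem_support.1 fun hx' => hi (hx hx'), zero_mul]
  have hsupp : ∀ z : Fin n → ℝ, z.support ⊆ x.support ∪ y.support → IsSparse s z :=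
    fun z hz => IsSparse.of_support_subset (S := S ∪ T)
      (by rw [coe_union]; exact hz.trans (Set.union_subset_union hx hy))
      ((card_union_le S T).trans hcard)
  have hplus := (hA (x + y) (hsupp _ (Function.support_add x y))).2
  have hminus := (hA (x - y) (hsupp _ (Function.support_sub x y))).1
  have hnorm_plus : ∑ i, (x + y) i ^ 2 = ∑ i, x i ^ 2 + ∑ i, y i ^ 2 := by
    rw [← sum_add_distrib]
    exact sum_congr rfl fun i _ => by
      rw [Pi.add_apply]; linear_combination 2 * horth i
  have hnorm_minus : ∑ i, (x - y) i ^ 2 = ∑ i, x i ^ 2 + ∑ i, y i ^ 2 := by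
    rw [← sum_add_distrib]
    exact sum_congr rfl fun i _ => by
      rw [Pi.sub_apply]; linear_combination -2 * horth i
  have hpolar : ∑ j, (A *ᵥ (x + y)) j ^ 2 - ∑ j, (A *ᵥ (x - y)) j ^ 2
      = 4 * ∑ j, (A *ᵥ x) j * (A *ᵥ y) j := by
    rw [← sum_sub_distrib, mul_sum]
    exact sum_congr rfl fun j _ => by
      rw [mulVec_add, mulVec_sub, Pi.add_apply, Pi.sub_apply]; ring
  rw [hnorm_plus] at hplus
  rw [hnorm_minus] at hminus
  linarith

/-- The quadratic `t ↦ δ‖x‖² t² - 2⟨Ax, Ay⟩ t + δ‖y‖²` is nonnegative, so its discriminant is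
nonpositive. -/
theorem sq_inner_le (hA : IsRIP A s δ) (hx : x.support ⊆ S) (hy : y.support ⊆ T)
    (hST : Disjoint S T) (hcard : #S + #T ≤ s) :
    (∑ j, (A *ᵥ x) j * (A *ᵥ y) j) ^ 2 ≤ δ ^ 2 * (∑ i, x i ^ 2) * ∑ i, y i ^ 2 := by
  have hquad : ∀ t : ℝ, 0 ≤ δ * (∑ i, x i ^ 2) * (t * t) + (-2 * ∑ j, (A *ᵥ x) j * (A *ᵥ y) j) * t
      + δ * ∑ i, y i ^ 2 := fun t => by
    have := hA.two_mul_inner_le ((Function.support_const_smul_subset t x).trans hx) hy hST hcard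
    simp only [mulVec_smul, Pi.smul_apply, smul_eq_mul, mul_pow, ← mul_sum, mul_assoc] at this
    linarith
  have := discrim_le_zero hquad
  rw [discrim] at this
  linarith

theorem abs_inner_le (hA : IsRIP A s δ) (hδ : 0 ≤ δ) (hx : x.support ⊆ S)
    (hy : y.support ⊆ T) (hST : Disjoint S T) (hcard : #S + #T ≤ s) :
    |∑ j, (A *ᵥ x) j * (A *ᵥ y) j| ≤ δ * √(∑ i, x i ^ 2) * √(∑ i, y i ^ 2) := by
  refine abs_le_of_sq_le_sq ?_ (by positivity)
  rw [mul_pow, mul_pow, Real.sq_sqrt (by positivity), Real.sq_sqrt (by positivity)]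
  exact hA.sq_inner_le hx hy hST hcard

variable (h : Fin n → ℝ) {I J : Finset (Fin n)}

theorem abs_inner_indicator_union_le (hA : IsRIP A (2 * k) δ) (hδ : 0 ≤ δ)
    {S : Finset (Fin n)} (hIJ : Disjoint I J) (hI : #I ≤ k) (hJ : #J ≤ k) (hS : #S ≤ k)
    (hIS : Disjoint I S) (hJS : Disjoint J S) :
    |∑ j, (A *ᵥ (↑(I ∪ J) : Set (Fin n)).indicator h) j * (A *ᵥ (S : Set (Fin n)).indicator h) j|
      ≤ √2 * δ * √(∑ i ∈ I ∪ J, h i ^ 2) * √(∑ i ∈ S, h i ^ 2) := by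
  have hbound : ∀ R : Finset (Fin n), #R ≤ k → Disjoint R S →
      |∑ j, (A *ᵥ (R : Set (Fin n)).indicator h) j * (A *ᵥ (S : Set (Fin n)).indicator h) j|
        ≤ δ * √(∑ i ∈ R, h i ^ 2) * √(∑ i ∈ S, h i ^ 2) := fun R hR hRS => by
    simpa only [sum_indicator_sq] using hA.abs_inner_le hδ Set.support_indicator_subset
      Set.support_indicator_subset hRS (by omega)
  rw [Finset.indicator_union_of_disjoint hIJ, mulVec_add]
  simp only [Pi.add_apply, add_mul, sum_add_distrib]
  calc _ ≤ _ := abs_add_le _ _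
    _ ≤ δ * (√(∑ i ∈ I, h i ^ 2) + √(∑ i ∈ J, h i ^ 2)) * √(∑ i ∈ S, h i ^ 2) := by
        rw [mul_add, add_mul]; exact add_le_add (hbound I hI hIS) (hbound J hJ hJS)
    _ ≤ δ * (√2 * √(∑ i ∈ I, h i ^ 2 + ∑ i ∈ J, h i ^ 2)) * √(∑ i ∈ S, h i ^ 2) := by
        gcongr
        exact Real.sqrt_add_sqrt_le_sqrt_two_mul_sqrt_add (by positivity) (by positivity)
    _ = √2 * δ * √(∑ i ∈ I ∪ J, h i ^ 2) * √(∑ i ∈ S, h i ^ 2) := by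
        rw [sum_union hIJ]; ring

theorem abs_inner_indicator_compl_sdiff_le (hA : IsRIP A (2 * k) δ) (hδ : 0 ≤ δ) (hk : 0 < k)
    (hI : #I ≤ k) (hJsub : J ⊆ Iᶜ) (hJcard : #J = min k #Iᶜ)
    (hJmax : ∀ j ∈ J, ∀ i ∈ Iᶜ \ J, |h i| ≤ |h j|) :
    |∑ j, (A *ᵥ (↑(I ∪ J) : Set (Fin n)).indicator h) j *
        (A *ᵥ (↑(Iᶜ \ J) : Set (Fin n)).indicator h) j|
      ≤ √2 * δ * √(∑ i ∈ I ∪ J, h i ^ 2) * ((∑ i ∈ Iᶜ, |h i|) / √k) := by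
  have hJk : #J ≤ k := hJcard ▸ min_le_left _ _
  have hIJ : Disjoint I J := disjoint_of_subset_right hJsub disjoint_compl_right
  have hfa : ∀ i ∈ Iᶜ \ J, k * |h i| ≤ ∑ j ∈ J, |h j| := fun i hi => by
    have hJk' : #J = k := by
      have := card_sdiff_of_subset hJsub
      have := card_pos.2 ⟨i, hi⟩
      omega
    simpa [hJk'] using J.card_nsmul_le_sum (|h ·|) |h i| fun j hj => hJmax j hj i hi
  have := abs_le_of_abs_le_mul_sqrt_sum_sq
    (fun S => ∑ j, (A *ᵥ (↑(I ∪ J) : Set (Fin n)).indicator h) j *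
      (A *ᵥ (S : Set (Fin n)).indicator h) j)
    (fun S R hSR => by
      simp only [Finset.indicator_union_of_disjoint hSR, mulVec_add, Pi.add_apply, mul_add,
        sum_add_distrib])
    h hk (C := √2 * δ * √(∑ i ∈ I ∪ J, h i ^ 2)) (by positivity) (Iᶜ \ J)
    (fun S hS hSk => hA.abs_inner_indicator_union_le h hδ hIJ hI hJk hSk
      (disjoint_of_subset_right (hS.trans sdiff_subset) disjoint_compl_right)
      (disjoint_of_subset_right hS disjoint_sdiff))
    (sum_nonneg fun i _ => abs_nonneg _) hfa
  rwa [add_comm, sum_sdiff hJsub] at this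

end IsRIP

end RIP

theorem stmt_18_general (m n k : ℕ) (hk : 0 < k) (A : Matrix (Fin m) (Fin n) ℝ)
    (δ ε : ℝ) (hδ0 : 0 < δ)
    (hRIP : IsRIP A (2 * k) δ)
    (h : Fin n → ℝ) (I J : Finset (Fin n)) (hI : I.card ≤ k)
    (hJsub : J ⊆ Iᶜ) (hJcard : J.card = min k Iᶜ.card)
    (hJmax : ∀ j ∈ J, ∀ i ∈ Iᶜ \ J, |h i| ≤ |h j|)
    (hAh : Real.sqrt (∑ j, A.mulVec h j ^ 2) ≤ 2 * ε) :
    (1 - δ) * Real.sqrt (∑ i ∈ I ∪ J, h i ^ 2) ≤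
      Real.sqrt 2 * δ * (∑ i ∈ Iᶜ, |h i|) / Real.sqrt k +
        Real.sqrt (1 + δ) * (2 * ε) := by
  set x₀ := (↑(I ∪ J) : Set (Fin n)).indicator h
  set y := (↑(Iᶜ \ J) : Set (Fin n)).indicator h
  set X := ∑ i ∈ I ∪ J, h i ^ 2
  have hε : 0 ≤ ε := by linarith [(Real.sqrt_nonneg _).trans hAh]
  have hx₀ := hRIP x₀ (IsSparse.of_support_subset Set.support_indicator_subset
    ((card_union_le I J).trans (by omega)))
  rw [sum_indicator_sq] at hx₀
  have hsplit : A *ᵥ x₀ + A *ᵥ y = A *ᵥ h := by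
    have hcompl : Iᶜ \ J = (I ∪ J)ᶜ := by rw [compl_union, sdiff_eq_inter_compl]
    rw [← mulVec_add]
    simp only [x₀, y, hcompl, coe_compl, Set.indicator_self_add_compl]
  have hupper : √(∑ j, (A *ᵥ x₀) j ^ 2) ≤ √(1 + δ) * √X :=
    (Real.sqrt_le_sqrt hx₀.2).trans_eq (Real.sqrt_mul (by linarith) X)
  have htail : |∑ j, (A *ᵥ x₀) j * (A *ᵥ y) j| ≤ √2 * δ * √X * ((∑ i ∈ Iᶜ, |h i|) / √k) :=
    hRIP.abs_inner_indicator_compl_sdiff_le h hδ0.le hk hI hJsub hJcard hJmax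
  refine mul_sqrt_le_of_mul_le_sqrt_mul (sum_nonneg fun i _ => sq_nonneg _) (by positivity) ?_
  calc (1 - δ) * X
      ≤ √(∑ j, (A *ᵥ x₀) j ^ 2) * √(∑ j, (A *ᵥ h) j ^ 2) - ∑ j, (A *ᵥ x₀) j * (A *ᵥ y) j :=
        hx₀.1.trans (sum_sq_le_sqrt_mul_sqrt_sub univ hsplit)
    _ ≤ √(1 + δ) * √X * (2 * ε) + √2 * δ * √X * ((∑ i ∈ Iᶜ, |h i|) / √k) := by
      rw [sub_eq_add_neg]
      exact add_le_add (mul_le_mul hupper hAh (Real.sqrt_nonneg _) (by positivity))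
        ((neg_le_abs _).trans htail)
    _ = _ := by ring

/-- Per-frame compressed sensing bound: if `A` is RIP of order `2k` with
constant `δ`, `|I| ≤ k`, `J` is the set of the `k` largest-magnitude entries of
`h` outside `I`, and `‖Ah‖₂ ≤ 2ε`, then
`(1-δ)‖h_{I∪J}‖₂ ≤ √2 δ ‖h_{Iᶜ}‖₁/√k + (1+δ)^{1/2}·2ε`. -/
theorem stmt_18 (m n k : ℕ) (hk : 0 < k) (A : Matrix (Fin m) (Fin n) ℝ)
    (δ ε : ℝ) (hδ0 : 0 < δ) (hε : 0 ≤ ε)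
    (hRIP : IsRIP A (2 * k) δ)
    (h : Fin n → ℝ) (I J : Finset (Fin n)) (hI : I.card ≤ k)
    (hJsub : J ⊆ Iᶜ) (hJcard : J.card = min k Iᶜ.card)
    (hJmax : ∀ j ∈ J, ∀ i ∈ Iᶜ \ J, |h i| ≤ |h j|)
    (hAh : Real.sqrt (∑ j, A.mulVec h j ^ 2) ≤ 2 * ε) :
    (1 - δ) * Real.sqrt (∑ i ∈ I ∪ J, h i ^ 2) ≤
      Real.sqrt 2 * δ * (∑ i ∈ Iᶜ, |h i|) / Real.sqrt k +
        Real.sqrt (1 + δ) * (2 * ε) :=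
  stmt_18_general m n k hk A δ ε hδ0 hRIP h I J hI hJsub hJcard hJmax hAh
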